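/- Let W be a symplectic vector space of dimension 2n and V a k-dimensional subspace. Fix a volume element μ ∈ Λ^{2n} W and let α_V ∈ Λ^{2n-k} W be the contraction of μ with a basis of V. If V is isotropic then α_V is coeffective (ω ∧ α_V = 0, viewing the wedge via the isomorphism induced by ω); if V is coisotropic then α_V is primitive (ι_π α_V = 0); if V is Lagrangian then α_V is both. -/

import Mathlib

/-!
Model of the exterior algebra of `V* = (ℝ^{2n})*`: a form is a family of
coefficients indexed by finite subsets `S ⊆ {0, …, 2n-1}` of coordinate
indices, representing `∑_S α_S dx_S`.  `wdg i` is wedging with `dxᵢ`,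
`ctr i` is contraction with `∂ᵢ`.  The symplectic form is
`ω = ∑_{i<n} dx_{2i} ∧ dx_{2i+1}` (0-indexed version of
`∑ dx_{2i-1} ∧ dx_{2i}`) and the dual bivector is
`π = ∑_{i<n} ∂_{2i} ∧ ∂_{2i+1}`.
-/

noncomputable section

abbrev Form := Finset ℕ → ℝ

/-- The sign `(-1)^{#{j ∈ S : j < i}}`. -/
def sgn (i : ℕ) (S : Finset ℕ) : ℝ := (-1 : ℝ) ^ (S.filter (· < i)).card

/-- Wedging with `dxᵢ`. -/
def wdg (i : ℕ) (α : Form) : Form :=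
  fun S => if i ∈ S then sgn i S * α (S.erase i) else 0

/-- Contraction with the coordinate vector field `∂ᵢ`. -/
def ctr (i : ℕ) (α : Form) : Form :=
  fun S => if i ∈ S then 0 else sgn i S * α (insert i S)

/-- The Lefschetz operator `L = ω ∧ ·` with `ω = ∑_{i<n} dx_{2i} ∧ dx_{2i+1}`. -/
def Lop (n : ℕ) (α : Form) : Form :=
  ∑ i ∈ Finset.range n, wdg (2 * i) (wdg (2 * i + 1) α)

/-- The dual Lefschetz operator `Λ = ι_π` with `π = ∑_{i<n} ∂_{2i} ∧ ∂_{2i+1}`. -/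
def Λop (n : ℕ) (α : Form) : Form :=
  ∑ i ∈ Finset.range n, ctr (2 * i + 1) (ctr (2 * i) α)

/-- The index-counting operator `H`, acting on `k`-forms as `(n - k)`. -/
def Hop (n : ℕ) (α : Form) : Form :=
  fun S => ((n : ℝ) - (S.card : ℝ)) * α S

/-- `α` only involves the coordinates `x_0, …, x_{2n-1}` of `ℝ^{2n}`. -/
def IsSupported (n : ℕ) (α : Form) : Prop :=
  ∀ S : Finset ℕ, ¬ S ⊆ Finset.range (2 * n) → α S = 0


/-- Vectors of `W = ℝ^{2n}`. -/
abbrev Vec (n : ℕ) := Fin (2 * n) → ℝ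

/-- Coordinates of a vector, extended by `0` to all of `ℕ`. -/
def coords (n : ℕ) (u : Vec n) (m : ℕ) : ℝ :=
  if h : m < 2 * n then u ⟨m, h⟩ else 0

/-- The standard symplectic form `ω = ∑_{i<n} dx_{2i} ∧ dx_{2i+1}` evaluated on
a pair of vectors. -/
def symp (n : ℕ) (u v : Vec n) : ℝ :=
  ∑ i ∈ Finset.range n,
    (coords n u (2 * i) * coords n v (2 * i + 1) -
      coords n u (2 * i + 1) * coords n v (2 * i))

/-- Contraction of a form with a vector `v ∈ ℝ^{2n}`: `ι_v = ∑ᵢ vᵢ ι_{∂ᵢ}`. -/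
def ctrVec (n : ℕ) (v : Vec n) (α : Form) : Form :=
  fun S => ∑ i ∈ Finset.range (2 * n), coords n v i * ctr i α S

/-- A fixed volume element `μ = dx_0 ∧ ⋯ ∧ dx_{2n-1} ∈ Λ^{2n} W`. -/
def vol (n : ℕ) : Form :=
  fun S => if S = Finset.range (2 * n) then 1 else 0

/-- The `(2n-k)`-form `α_V` obtained by contracting the basis `v_0, …, v_{k-1}`
of the subspace `V` into the volume element `μ`. -/
def alphaV (n k : ℕ) (v : Fin k → Vec n) : Form :=
  (List.finRange k).foldr (fun j β => ctrVec n (v j) β) (vol n)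

/-- `V = span v` is isotropic: `ω` vanishes on `V`. -/
def IsIsotropic (n k : ℕ) (v : Fin k → Vec n) : Prop :=
  ∀ i j, symp n (v i) (v j) = 0

/-- `V = span v` is coisotropic: the symplectic orthogonal of `V` is contained
in `V`. -/
def IsCoisotropic (n k : ℕ) (v : Fin k → Vec n) : Prop :=
  ∀ w : Vec n, (∀ j, symp n w (v j) = 0) → w ∈ Submodule.span ℝ (Set.range v)

/-!
`α_V` is the contraction `ι_X μ` of the multivector `X = v_0 ∧ ⋯ ∧ v_{k-1}` into the volume
element. Contraction into `μ` turns wedging with `dxᵢ` into contraction with `∂ᵢ` and vice versa,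
so it intertwines `L` with `-Λ` and `Λ` with `-L`. Hence `α_V` is coeffective as soon as
`Λ X = 0` (contraction of `X` with `ω`), and primitive as soon as `π ∧ X = 0`.

If `V` is isotropic, `Λ X = 0` by induction on `k`: `[Λ, u ∧ ·]` is the contraction with
`ω(u, ·)`, which anticommutes with `w ∧ ·` up to the scalar `ω(u, w)`, so it kills `X` when `u`
is one of the `v_j`. If `V` is coisotropic, let `Q` be a projection with
kernel `V`. As `X` is killed by wedging with `V`, in `π ∧ X` every vector may be replaced by its
image under `Q`, which turns `π` into `∑ M_pq ∂_p ∧ ∂_q`. The antisymmetric part of `M` is the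
Poisson bracket of functionals vanishing on `V`, i.e. `ω` evaluated on their Hamiltonian vectors,
which lie in `V^ω ⊆ V`; so `M` is symmetric and `π ∧ X = 0`.
-/

lemma Finset.sum_sum_smul_eq_zero_of_symm_of_antisymm {ι R E : Type*} [Monoid R]
    [AddCommGroup E] [DistribMulAction R E] [IsAddTorsionFree E] (s : Finset ι)
    {M : ι → ι → R} {T : ι → ι → E} (hMsymm : ∀ p q, M p q = M q p)
    (hT : ∀ p q, T p q = -T q p) :
    ∑ p ∈ s, ∑ q ∈ s, M p q • T p q = 0 := by
  rw [← self_eq_neg]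
  conv_lhs => rw [Finset.sum_comm]
  simp only [← Finset.sum_neg_distrib, ← smul_neg]
  exact Finset.sum_congr rfl fun p _ => Finset.sum_congr rfl fun q _ => by rw [hMsymm, hT]

lemma sum_range_two_mul {M : Type*} [AddCommMonoid M] (n : ℕ) (f : ℕ → M) :
    ∑ m ∈ Finset.range (2 * n), f m =
      ∑ i ∈ Finset.range n, (f (2 * i) + f (2 * i + 1)) := by
  induction n with
  | zero => simp
  | succ n ih =>
    rw [show 2 * (n + 1) = 2 * n + 1 + 1 by ring, Finset.sum_range_succ, Finset.sum_range_succ,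
      ih, Finset.sum_range_succ, add_assoc]

lemma Submodule.exists_projection_along {K W : Type*} [DivisionRing K] [AddCommGroup W]
    [Module K W] (V : Submodule K W) :
    ∃ Q : W →ₗ[K] W, (∀ y ∈ V, Q y = 0) ∧ ∀ x, x - Q x ∈ V := by
  obtain ⟨s, hs⟩ := V.mkQ.exists_rightInverse_of_surjective V.range_mkQ
  refine ⟨s ∘ₗ V.mkQ, fun y hy => ?_, fun x => ?_⟩
  · simp [(Submodule.Quotient.mk_eq_zero V).2 hy]
  · rw [← Submodule.Quotient.eq]
    exact (LinearMap.congr_fun hs (V.mkQ x)).symm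

lemma sgn_insert {i : ℕ} {S : Finset ℕ} (h : i ∉ S) (b : ℕ) :
    sgn b (insert i S) = (if i < b then -1 else 1) * sgn b S := by
  unfold sgn
  rw [Finset.filter_insert]
  split_ifs
  · rw [Finset.card_insert_of_notMem (by simp [h]), pow_succ]; ring
  · ring

lemma sgn_erase {i : ℕ} {S : Finset ℕ} (h : i ∈ S) (b : ℕ) :
    sgn b (S.erase i) = (if i < b then -1 else 1) * sgn b S := by
  conv_rhs => rw [← Finset.insert_erase h, sgn_insert (Finset.notMem_erase i S)]
  split_ifs <;> ring

lemma neg_one_pow_mul_self {R : Type*} [Monoid R] [HasDistribNeg R] (a : ℕ) :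
    (-1 : R) ^ a * (-1) ^ a = 1 := by
  rw [← pow_add, ← two_mul, pow_mul, neg_one_sq, one_pow]

lemma sgn_mul_self (i : ℕ) (S : Finset ℕ) : sgn i S * sgn i S = 1 :=
  neg_one_pow_mul_self _

def wdgL (i : ℕ) : Module.End ℝ Form where
  toFun := wdg i
  map_add' α β := by funext S; simp only [wdg, Pi.add_apply]; split_ifs <;> ring
  map_smul' c α := by
    funext S; simp only [wdg, Pi.smul_apply, smul_eq_mul, RingHom.id_apply]; split_ifs <;> ring

def ctrL (i : ℕ) : Module.End ℝ Form where
  toFun := ctr i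
  map_add' α β := by funext S; simp only [ctr, Pi.add_apply]; split_ifs <;> ring
  map_smul' c α := by
    funext S; simp only [ctr, Pi.smul_apply, smul_eq_mul, RingHom.id_apply]; split_ifs <;> ring

lemma wdgL_apply (i : ℕ) (α : Form) : wdgL i α = wdg i α := rfl

lemma ctrL_apply (i : ℕ) (α : Form) : ctrL i α = ctr i α := rfl

lemma wdgL_mul_wdgL (a b : ℕ) : wdgL a * wdgL b = -(wdgL b * wdgL a) := by
  ext α S
  simp only [Module.End.mul_apply, LinearMap.neg_apply, wdgL_apply, Pi.neg_apply, wdg]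
  rcases eq_or_ne a b with rfl | hab
  · simp
  by_cases ha : a ∈ S <;> by_cases hb : b ∈ S <;>
    simp [ha, hb, hab, hab.symm, Finset.erase_right_comm]
  rw [sgn_erase ha, sgn_erase hb]
  rcases hab.lt_or_gt with h | h <;> simp [h, h.not_gt] <;> ring

lemma ctrL_mul_ctrL (a b : ℕ) : ctrL a * ctrL b = -(ctrL b * ctrL a) := by
  ext α S
  simp only [Module.End.mul_apply, LinearMap.neg_apply, ctrL_apply, Pi.neg_apply, ctr]
  rcases eq_or_ne a b with rfl | hab
  · simp
  by_cases ha : a ∈ S <;> by_cases hb : b ∈ S <;>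
    simp [ha, hb, hab, hab.symm, Finset.insert_comm]
  rw [sgn_insert ha, sgn_insert hb]
  rcases hab.lt_or_gt with h | h <;> simp [h, h.not_gt] <;> ring

lemma ctrL_mul_wdgL (a b : ℕ) :
    ctrL a * wdgL b = (if a = b then 1 else 0) - wdgL b * ctrL a := by
  ext α S
  simp only [Module.End.mul_apply, LinearMap.sub_apply, ctrL_apply, wdgL_apply, Pi.sub_apply,
    ctr, wdg]
  rcases eq_or_ne a b with rfl | hab
  · by_cases ha : a ∈ S
    · simp [ha, sgn_erase ha, ← mul_assoc, sgn_mul_self]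
    · simp [ha, sgn_insert ha, ← mul_assoc, sgn_mul_self]
  by_cases ha : a ∈ S <;> by_cases hb : b ∈ S <;> simp [ha, hb, hab, hab.symm]
  rw [sgn_insert ha, sgn_erase hb, ← Finset.erase_insert_of_ne hab]
  rcases hab.lt_or_gt with h | h <;> simp [h, h.not_gt] <;> ring

lemma sgn_range_sdiff {a m : ℕ} (ha : a ≤ m) (S : Finset ℕ) :
    sgn a (Finset.range m \ S) = (-1) ^ a * sgn a S := by
  have h₁ : (Finset.range m \ S).filter (· < a) = Finset.range a \ S := by
    ext j; simp only [Finset.mem_filter, Finset.mem_sdiff, Finset.mem_range]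
    exact ⟨fun h => ⟨h.2, h.1.2⟩, fun h => ⟨⟨by omega, h.2⟩, h.1⟩⟩
  have h₂ : S.filter (· < a) = Finset.range a ∩ S := by
    ext j; simp only [Finset.mem_filter, Finset.mem_inter, Finset.mem_range]; tauto
  have hc := Finset.card_sdiff_add_card_inter (Finset.range a) S
  rw [Finset.card_range] at hc
  rw [sgn, sgn, h₁, h₂]
  set x := (Finset.range a \ S).card
  set y := (Finset.range a ∩ S).card
  rw [← hc, pow_add, mul_assoc, neg_one_pow_mul_self, mul_one]

/-- `contractVol n X` is `ι_X μ`, the contraction of the multivector `X` into `μ = vol n`;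
multivectors are encoded like forms, `X S` being the coefficient of `∂_S`. -/
def contractVol (n : ℕ) : Module.End ℝ Form where
  toFun X S := if S ⊆ Finset.range (2 * n) then
    (-1) ^ (n + ∑ i ∈ S, i) * X (Finset.range (2 * n) \ S) else 0
  map_add' X Y := by funext S; simp only [Pi.add_apply]; split_ifs <;> ring
  map_smul' c X := by
    funext S; simp only [Pi.smul_apply, smul_eq_mul, RingHom.id_apply]; split_ifs <;> ring

lemma contractVol_apply (n : ℕ) (X : Form) (S : Finset ℕ) :
    contractVol n X S = if S ⊆ Finset.range (2 * n) then
      (-1) ^ (n + ∑ i ∈ S, i) * X (Finset.range (2 * n) \ S) else 0 := rfl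

lemma ctrL_mul_contractVol {n a : ℕ} (ha : a < 2 * n) :
    ctrL a * contractVol n = contractVol n * wdgL a := by
  ext X S
  simp only [Module.End.mul_apply, ctrL_apply, wdgL_apply, contractVol_apply, ctr, wdg]
  by_cases haS : a ∈ S
  · simp [haS]
  by_cases hS : S ⊆ Finset.range (2 * n)
  · have hins : insert a S ⊆ Finset.range (2 * n) :=
      Finset.insert_subset (Finset.mem_range.2 ha) hS
    have hmem : a ∈ Finset.range (2 * n) \ S := by simp [ha, haS]
    have hdiff : (Finset.range (2 * n) \ S).erase a = Finset.range (2 * n) \ insert a S := by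
      ext j; simp only [Finset.mem_erase, Finset.mem_sdiff, Finset.mem_insert]; tauto
    simp only [haS, hS, hins, hmem, if_true, if_false, hdiff, Finset.sum_insert haS,
      sgn_range_sdiff ha.le]
    ring
  · have hins : ¬ insert a S ⊆ Finset.range (2 * n) := fun h =>
      hS ((Finset.subset_insert a S).trans h)
    simp [haS, hS, hins]

lemma wdgL_mul_contractVol {n a : ℕ} (ha : a < 2 * n) :
    wdgL a * contractVol n = contractVol n * ctrL a := by
  ext X S
  simp only [Module.End.mul_apply, ctrL_apply, wdgL_apply, contractVol_apply, ctr, wdg]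
  by_cases haS : a ∈ S
  · have hsub : S.erase a ⊆ Finset.range (2 * n) ↔ S ⊆ Finset.range (2 * n) := by
      rw [← Finset.insert_subset_iff.trans (and_iff_right (Finset.mem_range.2 ha)),
        Finset.insert_erase haS]
    have hnmem : a ∉ Finset.range (2 * n) \ S := by simp [haS]
    have hdiff : insert a (Finset.range (2 * n) \ S) = Finset.range (2 * n) \ S.erase a := by
      ext j; simp only [Finset.mem_erase, Finset.mem_sdiff, Finset.mem_insert, Finset.mem_range]
      constructor
      · rintro (rfl | h) <;> [exact ⟨ha, by simp⟩; tauto]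
      · tauto
    simp only [haS, hsub, hnmem, if_true, if_false, hdiff, sgn_range_sdiff ha.le]
    split_ifs
    · rw [← Finset.add_sum_erase S _ haS]
      linear_combination -(sgn a S * X (Finset.range (2 * n) \ S.erase a) *
        (-1) ^ (n + ∑ i ∈ S.erase a, i)) * neg_one_pow_mul_self (R := ℝ) a
    · ring
  · simp [haS, ha]

def coordL (n m : ℕ) : Vec n →ₗ[ℝ] ℝ where
  toFun u := coords n u m
  map_add' u w := by unfold coords; split_ifs <;> simp
  map_smul' c u := by unfold coords; split_ifs <;> simp

def wedgeVec (n : ℕ) : Vec n →ₗ[ℝ] Module.End ℝ Form :=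
  ∑ m ∈ Finset.range (2 * n), (coordL n m).smulRight (wdgL m)

lemma wedgeVec_apply (n : ℕ) (u : Vec n) :
    wedgeVec n u = ∑ m ∈ Finset.range (2 * n), coords n u m • wdgL m := by
  simp [wedgeVec, coordL]

lemma ctrL_mul_wedgeVec {n a : ℕ} (ha : a < 2 * n) (u : Vec n) :
    ctrL a * wedgeVec n u = coords n u a • 1 - wedgeVec n u * ctrL a := by
  simp only [wedgeVec_apply, Finset.mul_sum, Finset.sum_mul, mul_smul_comm, smul_mul_assoc,
    ctrL_mul_wdgL, smul_sub, Finset.sum_sub_distrib, smul_ite, smul_zero]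
  rw [Finset.sum_ite_eq, if_pos (Finset.mem_range.2 ha)]

lemma wedgeVec_mul_wdgL (n : ℕ) (u : Vec n) (b : ℕ) :
    wedgeVec n u * wdgL b = -(wdgL b * wedgeVec n u) := by
  simp only [wedgeVec_apply, Finset.mul_sum, Finset.sum_mul, mul_smul_comm, smul_mul_assoc,
    wdgL_mul_wdgL _ b, smul_neg, Finset.sum_neg_distrib]

lemma wedgeVec_mul_wedgeVec (n : ℕ) (u w : Vec n) :
    wedgeVec n u * wedgeVec n w = -(wedgeVec n w * wedgeVec n u) := by
  rw [wedgeVec_apply n w]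
  simp only [Finset.mul_sum, Finset.sum_mul, mul_smul_comm, smul_mul_assoc, wedgeVec_mul_wdgL,
    smul_neg, Finset.sum_neg_distrib]

lemma wedgeVec_mul_self (n : ℕ) (u : Vec n) : wedgeVec n u * wedgeVec n u = 0 :=
  have := IsAddTorsionFree.of_module_rat (Module.End ℝ Form)
  self_eq_neg.1 (wedgeVec_mul_wedgeVec n u u)

def lefschetz (n : ℕ) : Module.End ℝ Form :=
  ∑ i ∈ Finset.range n, wdgL (2 * i) * wdgL (2 * i + 1)

def dualLefschetz (n : ℕ) : Module.End ℝ Form :=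
  ∑ i ∈ Finset.range n, ctrL (2 * i + 1) * ctrL (2 * i)

lemma lefschetz_apply (n : ℕ) (α : Form) : lefschetz n α = Lop n α := by
  simp [lefschetz, Lop, wdgL_apply]

lemma dualLefschetz_apply (n : ℕ) (α : Form) : dualLefschetz n α = Λop n α := by
  simp [dualLefschetz, Λop, ctrL_apply]

lemma dualLefschetz_mul_contractVol (n : ℕ) :
    dualLefschetz n * contractVol n = -(contractVol n * lefschetz n) := by
  simp only [dualLefschetz, lefschetz, Finset.sum_mul, Finset.mul_sum, ← Finset.sum_neg_distrib]
  refine Finset.sum_congr rfl fun i hi => ?_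
  have hi := Finset.mem_range.1 hi
  rw [mul_assoc, ctrL_mul_contractVol (by omega), ← mul_assoc, ctrL_mul_contractVol (by omega),
    mul_assoc, wdgL_mul_wdgL]
  exact mul_neg (contractVol n) _

lemma lefschetz_mul_contractVol (n : ℕ) :
    lefschetz n * contractVol n = -(contractVol n * dualLefschetz n) := by
  simp only [dualLefschetz, lefschetz, Finset.sum_mul, Finset.mul_sum, ← Finset.sum_neg_distrib]
  refine Finset.sum_congr rfl fun i hi => ?_
  have hi := Finset.mem_range.1 hi
  rw [mul_assoc, wdgL_mul_contractVol (by omega), ← mul_assoc, wdgL_mul_contractVol (by omega),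
    mul_assoc, ctrL_mul_ctrL]
  exact mul_neg (contractVol n) _

def contractFlat (n : ℕ) (u : Vec n) : Module.End ℝ Form :=
  ∑ i ∈ Finset.range n,
    (coords n u (2 * i) • ctrL (2 * i + 1) - coords n u (2 * i + 1) • ctrL (2 * i))

lemma contractFlat_mul_wedgeVec (n : ℕ) (u w : Vec n) :
    contractFlat n u * wedgeVec n w = symp n u w • 1 - wedgeVec n w * contractFlat n u := by
  simp only [contractFlat, symp, Finset.sum_mul, Finset.mul_sum, Finset.sum_smul,
    ← Finset.sum_sub_distrib]
  refine Finset.sum_congr rfl fun i hi => ?_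
  have hi := Finset.mem_range.1 hi
  simp only [sub_mul, mul_sub, smul_mul_assoc, mul_smul_comm, smul_sub, sub_smul, smul_smul,
    ctrL_mul_wedgeVec (show 2 * i < 2 * n by omega),
    ctrL_mul_wedgeVec (show 2 * i + 1 < 2 * n by omega)]
  abel

lemma dualLefschetz_mul_wedgeVec (n : ℕ) (u : Vec n) :
    dualLefschetz n * wedgeVec n u = contractFlat n u + wedgeVec n u * dualLefschetz n := by
  simp only [dualLefschetz, contractFlat, Finset.sum_mul, Finset.mul_sum,
    ← Finset.sum_add_distrib]
  refine Finset.sum_congr rfl fun i hi => ?_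
  have hi := Finset.mem_range.1 hi
  rw [mul_assoc, ctrL_mul_wedgeVec (show 2 * i < 2 * n by omega), mul_sub, ← mul_assoc,
    ctrL_mul_wedgeVec (show 2 * i + 1 < 2 * n by omega)]
  simp only [mul_smul_comm, mul_one, sub_mul, smul_mul_assoc, one_mul, mul_assoc]
  abel

lemma Lop_contractVol (n : ℕ) (X : Form) :
    Lop n (contractVol n X) = -contractVol n (dualLefschetz n X) := by
  rw [← lefschetz_apply, ← Module.End.mul_apply, lefschetz_mul_contractVol]; rfl

lemma Λop_contractVol (n : ℕ) (X : Form) :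
    Λop n (contractVol n X) = -contractVol n (lefschetz n X) := by
  rw [← dualLefschetz_apply, ← Module.End.mul_apply, dualLefschetz_mul_contractVol]; rfl

lemma ctrL_single_empty (m : ℕ) : ctrL m (Pi.single ∅ 1) = 0 := by
  ext S
  simp [ctrL_apply, ctr]

lemma contractFlat_single_empty (n : ℕ) (u : Vec n) :
    contractFlat n u (Pi.single ∅ 1) = 0 := by
  simp [contractFlat, LinearMap.sum_apply, ctrL_single_empty]

lemma dualLefschetz_single_empty (n : ℕ) : dualLefschetz n (Pi.single ∅ 1) = 0 := by
  simp [dualLefschetz, LinearMap.sum_apply, ctrL_single_empty]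

def wedgeList (n : ℕ) (l : List (Vec n)) : Form :=
  l.foldr (fun u X => wedgeVec n u X) (Pi.single ∅ 1)

lemma wedgeList_cons (n : ℕ) (u : Vec n) (l : List (Vec n)) :
    wedgeList n (u :: l) = wedgeVec n u (wedgeList n l) := rfl

lemma contractFlat_wedgeList_eq_zero {n : ℕ} {u : Vec n} {l : List (Vec n)}
    (h : ∀ w ∈ l, symp n u w = 0) : contractFlat n u (wedgeList n l) = 0 := by
  induction l with
  | nil => exact contractFlat_single_empty n u
  | cons w l ih =>
    rw [wedgeList_cons, ← Module.End.mul_apply, contractFlat_mul_wedgeVec,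
      h w List.mem_cons_self, zero_smul, zero_sub, LinearMap.neg_apply, Module.End.mul_apply,
      ih fun w' hw' => h w' (List.mem_cons_of_mem w hw'), map_zero, neg_zero]

lemma dualLefschetz_wedgeList_eq_zero {n : ℕ} {l : List (Vec n)}
    (h : ∀ u ∈ l, ∀ w ∈ l, symp n u w = 0) : dualLefschetz n (wedgeList n l) = 0 := by
  induction l with
  | nil => exact dualLefschetz_single_empty n
  | cons u l ih =>
    rw [wedgeList_cons, ← Module.End.mul_apply, dualLefschetz_mul_wedgeVec, LinearMap.add_apply,
      Module.End.mul_apply,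
      contractFlat_wedgeList_eq_zero fun w hw =>
        h u List.mem_cons_self w (List.mem_cons_of_mem u hw),
      ih fun u' hu' w hw => h u' (List.mem_cons_of_mem _ hu') w (List.mem_cons_of_mem _ hw),
      map_zero, add_zero]

lemma wedgeVec_wedgeList_eq_zero_of_mem {n : ℕ} {u : Vec n} {l : List (Vec n)} (h : u ∈ l) :
    wedgeVec n u (wedgeList n l) = 0 := by
  induction l with
  | nil => simp at h
  | cons w l ih =>
    rw [wedgeList_cons, ← Module.End.mul_apply]
    rcases List.mem_cons.1 h with rfl | h
    · rw [wedgeVec_mul_self, LinearMap.zero_apply]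
    · rw [wedgeVec_mul_wedgeVec, LinearMap.neg_apply, Module.End.mul_apply, ih h, map_zero,
        neg_zero]

lemma wedgeVec_wedgeList_eq_zero_of_mem_span {n : ℕ} {u : Vec n} {l : List (Vec n)}
    (h : u ∈ Submodule.span ℝ {w | w ∈ l}) : wedgeVec n u (wedgeList n l) = 0 := by
  have hle : Submodule.span ℝ {w | w ∈ l} ≤
      LinearMap.ker (LinearMap.applyₗ (wedgeList n l) ∘ₗ wedgeVec n) :=
    Submodule.span_le.2 fun w hw => wedgeVec_wedgeList_eq_zero_of_mem hw
  exact hle h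

lemma ctrVec_contractVol (n : ℕ) (u : Vec n) (X : Form) :
    ctrVec n u (contractVol n X) = contractVol n (wedgeVec n u X) := by
  ext S
  simp only [ctrVec, wedgeVec_apply, LinearMap.sum_apply, LinearMap.smul_apply, map_sum,
    map_smul, Finset.sum_apply, Pi.smul_apply, smul_eq_mul]
  refine Finset.sum_congr rfl fun m hm => ?_
  rw [← ctrL_apply, ← Module.End.mul_apply, ctrL_mul_contractVol (Finset.mem_range.1 hm)]
  rfl

lemma contractVol_single_empty (n : ℕ) : contractVol n (Pi.single ∅ 1) = vol n := by
  ext S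
  have hsum : Even (n + ∑ i ∈ Finset.range (2 * n), i) := by
    induction n with
    | zero => simp
    | succ n ih =>
      obtain ⟨c, hc⟩ := ih
      rw [show 2 * (n + 1) = 2 * n + 1 + 1 by ring, Finset.sum_range_succ, Finset.sum_range_succ]
      exact ⟨c + 2 * n + 1, by omega⟩
  by_cases hS : S = Finset.range (2 * n)
  · subst hS; simp [contractVol_apply, vol, hsum.neg_one_pow]
  · simp [contractVol_apply, vol, hS, Pi.single_apply]
    exact fun h h' => hS (Finset.Subset.antisymm h h')

lemma alphaV_eq_contractVol (n k : ℕ) (v : Fin k → Vec n) :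
    alphaV n k v = contractVol n (wedgeList n (List.ofFn v)) := by
  rw [alphaV, ← contractVol_single_empty, wedgeList, List.ofFn_eq_map, List.foldr_map]
  induction List.finRange k with
  | nil => rfl
  | cons j l ih => simp only [List.foldr_cons, ih, ctrVec_contractVol]

def stdVec (n m : ℕ) : Vec n := fun x => if (x : ℕ) = m then 1 else 0

lemma coords_stdVec {n p : ℕ} (hp : p < 2 * n) (m : ℕ) :
    coords n (stdVec n m) p = if p = m then 1 else 0 := by
  simp [coords, hp, stdVec]

lemma wedgeVec_stdVec {n m : ℕ} (hm : m < 2 * n) : wedgeVec n (stdVec n m) = wdgL m := by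
  rw [wedgeVec_apply, Finset.sum_congr rfl fun p hp => by
    rw [coords_stdVec (Finset.mem_range.1 hp), ite_smul, one_smul, zero_smul]]
  simp [hm]

lemma sum_coords_smul_stdVec (n : ℕ) (u : Vec n) :
    ∑ m ∈ Finset.range (2 * n), coords n u m • stdVec n m = u := by
  ext x
  simp only [Finset.sum_apply, Pi.smul_apply, stdVec, smul_eq_mul, mul_ite, mul_one, mul_zero,
    Finset.sum_ite_eq, Finset.mem_range, x.isLt, if_true, coords, dif_pos]

def hamVec (n : ℕ) (ξ : Vec n →ₗ[ℝ] ℝ) : Vec n :=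
  fun x => if (x : ℕ) % 2 = 0 then ξ (stdVec n (x + 1)) else -ξ (stdVec n (x - 1))

lemma coords_hamVec_two_mul {n i : ℕ} (hi : i < n) (ξ : Vec n →ₗ[ℝ] ℝ) :
    coords n (hamVec n ξ) (2 * i) = ξ (stdVec n (2 * i + 1)) := by
  simp [coords, hamVec, show 2 * i < 2 * n by omega]

lemma coords_hamVec_two_mul_add_one {n i : ℕ} (hi : i < n) (ξ : Vec n →ₗ[ℝ] ℝ) :
    coords n (hamVec n ξ) (2 * i + 1) = -ξ (stdVec n (2 * i)) := by
  simp [coords, hamVec, show 2 * i + 1 < 2 * n by omega, Nat.add_mod]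

lemma symp_hamVec (n : ℕ) (ξ : Vec n →ₗ[ℝ] ℝ) (u : Vec n) :
    symp n (hamVec n ξ) u = ξ u := by
  conv_rhs => rw [← sum_coords_smul_stdVec n u, sum_range_two_mul]
  simp only [map_sum, map_add, map_smul, smul_eq_mul, symp]
  refine Finset.sum_congr rfl fun i hi => ?_
  have hi := Finset.mem_range.1 hi
  rw [coords_hamVec_two_mul hi, coords_hamVec_two_mul_add_one hi]
  ring

def poisson (n : ℕ) (ξ η : Vec n →ₗ[ℝ] ℝ) : ℝ :=
  ∑ i ∈ Finset.range n, (ξ (stdVec n (2 * i)) * η (stdVec n (2 * i + 1)) -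
    ξ (stdVec n (2 * i + 1)) * η (stdVec n (2 * i)))

lemma symp_hamVec_hamVec (n : ℕ) (ξ η : Vec n →ₗ[ℝ] ℝ) :
    symp n (hamVec n ξ) (hamVec n η) = poisson n ξ η := by
  refine Finset.sum_congr rfl fun i hi => ?_
  have hi := Finset.mem_range.1 hi
  rw [coords_hamVec_two_mul hi, coords_hamVec_two_mul_add_one hi, coords_hamVec_two_mul hi,
    coords_hamVec_two_mul_add_one hi]
  ring

lemma poisson_eq_zero_of_coisotropic {n : ℕ} {V : Submodule ℝ (Vec n)}
    (hV : ∀ w, (∀ y ∈ V, symp n w y = 0) → w ∈ V) {ξ η : Vec n →ₗ[ℝ] ℝ}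
    (hξ : ∀ y ∈ V, ξ y = 0) (hη : ∀ y ∈ V, η y = 0) : poisson n ξ η = 0 := by
  rw [← symp_hamVec_hamVec, symp_hamVec]
  exact hξ _ (hV _ fun y hy => by rw [symp_hamVec, hη y hy])

lemma wdgL_eq_sum_of_wedgeVec_eq_zero {n : ℕ} {V : Submodule ℝ (Vec n)}
    {Q : Vec n →ₗ[ℝ] Vec n} (hQ : ∀ x, x - Q x ∈ V) {Z : Form}
    (hZ : ∀ y ∈ V, wedgeVec n y Z = 0) {m : ℕ} (hm : m < 2 * n) :
    wdgL m Z = ∑ p ∈ Finset.range (2 * n), coords n (Q (stdVec n m)) p • wdgL p Z := by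
  have h := hZ _ (hQ (stdVec n m))
  rw [map_sub, LinearMap.sub_apply, sub_eq_zero, wedgeVec_stdVec hm] at h
  rw [h, wedgeVec_apply]
  simp [LinearMap.sum_apply]

lemma lefschetz_eq_zero_of_coisotropic {n : ℕ} {V : Submodule ℝ (Vec n)}
    (hV : ∀ w, (∀ y ∈ V, symp n w y = 0) → w ∈ V) {Y : Form}
    (hY : ∀ y ∈ V, wedgeVec n y Y = 0) : lefschetz n Y = 0 := by
  obtain ⟨Q, hQV, hQ⟩ := V.exists_projection_along
  set ξ : ℕ → Vec n →ₗ[ℝ] ℝ := fun p => coordL n p ∘ₗ Q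
  set M : ℕ → ℕ → ℝ := fun p q =>
    ∑ i ∈ Finset.range n, ξ p (stdVec n (2 * i)) * ξ q (stdVec n (2 * i + 1))
  have hMsymm : ∀ p q, M p q = M q p := fun p q => by
    rw [← sub_eq_zero, ← Finset.sum_sub_distrib]
    refine (Finset.sum_congr rfl fun i _ => by ring).trans
      (poisson_eq_zero_of_coisotropic hV (ξ := ξ p) (η := ξ q) ?_ ?_) <;>
    · intro y hy; simp [ξ, hQV y hy]
  have hwdgY : ∀ q, ∀ y ∈ V, wedgeVec n y (wdgL q Y) = 0 := fun q y hy => by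
    rw [← Module.End.mul_apply, wedgeVec_mul_wdgL, LinearMap.neg_apply, Module.End.mul_apply,
      hY y hy, map_zero, neg_zero]
  calc lefschetz n Y = ∑ i ∈ Finset.range n, wdgL (2 * i) (wdgL (2 * i + 1) Y) := by
        simp [lefschetz, LinearMap.sum_apply]
    _ = ∑ i ∈ Finset.range n, ∑ p ∈ Finset.range (2 * n), ∑ q ∈ Finset.range (2 * n),
          (ξ p (stdVec n (2 * i)) * ξ q (stdVec n (2 * i + 1))) • wdgL p (wdgL q Y) := by
        refine Finset.sum_congr rfl fun i hi => ?_
        have hi := Finset.mem_range.1 hi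
        rw [wdgL_eq_sum_of_wedgeVec_eq_zero hQ hY (show 2 * i + 1 < 2 * n by omega), map_sum,
          Finset.sum_comm]
        refine Finset.sum_congr rfl fun q _ => ?_
        rw [map_smul, wdgL_eq_sum_of_wedgeVec_eq_zero hQ (hwdgY q) (show 2 * i < 2 * n by omega),
          Finset.smul_sum]
        refine Finset.sum_congr rfl fun p _ => ?_
        rw [smul_smul, mul_comm]
        rfl
    _ = ∑ p ∈ Finset.range (2 * n), ∑ q ∈ Finset.range (2 * n),
          M p q • wdgL p (wdgL q Y) := by
        simp only [M, Finset.sum_smul]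
        exact Finset.sum_comm.trans (Finset.sum_congr rfl fun p _ => Finset.sum_comm)
    _ = 0 := Finset.sum_sum_smul_eq_zero_of_symm_of_antisymm _ hMsymm fun p q => by
        rw [← Module.End.mul_apply, wdgL_mul_wdgL]; rfl

theorem alphaV_isotropic_coisotropic_general (n k : ℕ) (v : Fin k → Vec n) :
    (IsIsotropic n k v → Lop n (alphaV n k v) = 0) ∧
    (IsCoisotropic n k v → Λop n (alphaV n k v) = 0) ∧
    (IsIsotropic n k v → IsCoisotropic n k v →
      Lop n (alphaV n k v) = 0 ∧ Λop n (alphaV n k v) = 0) := by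
  have hspan : {w | w ∈ List.ofFn v} = Set.range v := Set.ext fun _ => List.mem_ofFn
  have hiso (h : IsIsotropic n k v) : Lop n (alphaV n k v) = 0 := by
    rw [alphaV_eq_contractVol, Lop_contractVol, dualLefschetz_wedgeList_eq_zero, map_zero,
      neg_zero]
    simp only [List.mem_ofFn]
    rintro _ ⟨i, rfl⟩ _ ⟨j, rfl⟩
    exact h i j
  have hcoiso (h : IsCoisotropic n k v) : Λop n (alphaV n k v) = 0 := by
    rw [alphaV_eq_contractVol, Λop_contractVol, lefschetz_eq_zero_of_coisotropic
      (V := Submodule.span ℝ (Set.range v)), map_zero, neg_zero]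
    · exact fun w hw => h w fun j => hw _ (Submodule.subset_span ⟨j, rfl⟩)
    · exact fun y hy => wedgeVec_wedgeList_eq_zero_of_mem_span (hspan ▸ hy)
  exact ⟨hiso, hcoiso, fun h₁ h₂ => ⟨hiso h₁, hcoiso h₂⟩⟩

/-- Let `W` be a symplectic vector space of dimension `2n` and
`V ⊆ W` a `k`-dimensional subspace with basis `v_0, …, v_{k-1}`; let
`α_V ∈ Λ^{2n-k} W` be the contraction of the basis of `V` into a fixed volume
element `μ`.  If `V` is isotropic then `α_V` is coeffective (`ω ∧ α_V = 0`);
if `V` is coisotropic then `α_V` is primitive (`ι_π α_V = 0`); if `V` is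
Lagrangian then `α_V` is both. -/
theorem alphaV_isotropic_coisotropic (n k : ℕ) (v : Fin k → Vec n)
    (hv : LinearIndependent ℝ v) :
    (IsIsotropic n k v → Lop n (alphaV n k v) = 0) ∧
    (IsCoisotropic n k v → Λop n (alphaV n k v) = 0) ∧
    (IsIsotropic n k v → IsCoisotropic n k v →
      Lop n (alphaV n k v) = 0 ∧ Λop n (alphaV n k v) = 0) :=
  alphaV_isotropic_coisotropic_general n k v

end
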